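/- arXiv:1207.3601 — 4 statements merged into one kernel-verified Lean document; each statement's English description precedes it below -/
import Mathlib

section
/- Let μ: 2^Γ → [0,1] be a symmetric polymatroidal function over a group Γ taking values in [0,1], and let (G=(V,E),ψ) be a finite Γ-gain graph. Then the function g_μ defined on subsets F of E by g_μ(F) = |V(F)| − c(F) + Σ_{X ∈ C(F)} μ⟨X⟩, where C(F) is the set of connected components of F, c(F) = |C(F)|, and μ⟨X⟩ = μ(⟨X⟩_{ψ,v}) for any base vertex v ∈ V(X), is monotone and submodular on 2^E. -/
/-- A directed multigraph: edges with a source and target map. -/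
structure GG (V E : Type*) where
  src : E → V
  tgt : E → V

namespace GG

variable {V E : Type*}

/-- The initial vertex of a step (an edge together with a direction). -/
def stepHead (G : GG V E) (s : E × Bool) : V := if s.2 then G.src s.1 else G.tgt s.1

/-- The final vertex of a step. -/
def stepLast (G : GG V E) (s : E × Bool) : V := if s.2 then G.tgt s.1 else G.src s.1

/-- Walks from `u` to `w` using only edges of `X`. -/
inductive IsWalkFrom (G : GG V E) (X : Set E) : V → V → List (E × Bool) → Prop
  | nil (v : V) : IsWalkFrom G X v v []
  | cons {u w : V} {s : E × Bool} {l : List (E × Bool)} (he : s.1 ∈ X)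
      (h1 : G.stepHead s = u) (hl : IsWalkFrom G X (G.stepLast s) w l) :
      IsWalkFrom G X u w (s :: l)

variable {Γ : Type*} [Group Γ]

/-- The gain of a walk: the product of the edge gains, inverted on backward edges. -/
def gainOf (ψ : E → Γ) : List (E × Bool) → Γ
  | [] => 1
  | s :: l => (if s.2 then ψ s.1 else (ψ s.1)⁻¹) * gainOf ψ l

/-- `⟨X⟩_{ψ,v}`: the subgroup generated by gains of closed walks at `v` using edges of `X`. -/
def walkGroup (G : GG V E) (ψ : E → Γ) (X : Set E) (v : V) : Subgroup Γ :=
  Subgroup.closure {g : Γ | ∃ l, G.IsWalkFrom X v v l ∧ gainOf ψ l = g}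

open Classical in
/-- The switching of the gain function `ψ` at vertex `v` with `γ`. -/
noncomputable def switch (G : GG V E) (ψ : E → Γ) (v : V) (γ : Γ) : E → Γ :=
  fun e => (if G.src e = v then γ else 1) * ψ e * (if G.tgt e = v then γ⁻¹ else 1)

/-- Two gain functions are equivalent if one is obtained from the other by a
finite sequence of switchings. -/
def Equivalent (G : GG V E) (ψ ψ' : E → Γ) : Prop :=
  Relation.ReflTransGen (fun a b => ∃ v γ, b = G.switch a v γ) ψ ψ'

/-- `V(X)`: the set of endvertices of edges of `X`. -/
def VSet (G : GG V E) (X : Set E) : Set V := {v | ∃ e ∈ X, G.src e = v ∨ G.tgt e = v}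

variable [Fintype V] [Fintype E] [DecidableEq V] [DecidableEq E]

/-- The finset of endvertices of the edges of `F`. -/
def vertexFinset (G : GG V E) (F : Finset E) : Finset V :=
  F.image G.src ∪ F.image G.tgt

/-- Two edges of `F` lie in the same connected component of `F`. -/
def compRel (G : GG V E) (F : Finset E) (e f : {x // x ∈ F}) : Prop :=
  ∃ l, G.IsWalkFrom ↑F (G.src e.1) (G.src f.1) l

/-- `c(F)`: the number of connected components of the edge set `F`. -/
noncomputable def numComp (G : GG V E) (F : Finset E) : ℕ :=
  Nat.card (Quot (G.compRel F))

/-- The connected component of `F` containing the edge `e`. -/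
def compCl (G : GG V E) (F : Finset E) (e : E) : Set E :=
  {f | f ∈ F ∧ ∃ l, G.IsWalkFrom ↑F (G.src e) (G.src f) l}

/-- `g_μ(F) = |V(F)| − c(F) + Σ_{X ∈ C(F)} μ⟨X⟩`, the sum being over the connected
components of `F`, each evaluated at a base vertex of the component. -/
noncomputable def gMu (G : GG V E) (ψ : E → Γ) (μ : Set Γ → ℝ) (F : Finset E) : ℝ :=
  ((G.vertexFinset F).card : ℝ) - (G.numComp F : ℝ) +
    ∑ᶠ q : Quot (G.compRel F),
      μ ↑(G.walkGroup ψ (G.compCl F q.out.1) (G.src q.out.1))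

end GG

/-- `μ` is a symmetric polymatroidal function over the group `Γ`: nonnegative,
normalized, monotone, submodular, invariant under taking generated subgroups,
and invariant under conjugation. -/
def SymPolymatroidal {Γ : Type*} [Group Γ] (μ : Set Γ → ℝ) : Prop :=
  μ ∅ = 0 ∧ (∀ X : Set Γ, 0 ≤ μ X) ∧ (∀ X Y : Set Γ, X ⊆ Y → μ X ≤ μ Y) ∧
  (∀ X Y : Set Γ, μ (X ∪ Y) + μ (X ∩ Y) ≤ μ X + μ Y) ∧
  (∀ X : Set Γ, X.Nonempty → μ ↑(Subgroup.closure X) = μ X) ∧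
  (∀ (X : Set Γ) (γ : Γ), X.Nonempty → μ ((fun x => γ * x * γ⁻¹) '' X) = μ X)

/-!
Adding an edge `e` to `F` changes `g_μ` in one of two ways. If a walk `W` in `F` already joins
the endpoints of `e`, the component at `src e`, with group `A`, gains the generator
`ψ e * gain W`, and `g_μ` grows by `μ (A ∪ {ψ e * gain W}) - μ A`. Otherwise `e` merges the
components at its endpoints, with groups `A` and `B` combining to `⟨A ∪ ψ e B ψ e⁻¹⟩`, and `g_μ`
grows by `1 + μ (A ∪ ψ e B ψ e⁻¹) - μ A - μ B`. In both formulas the subtracted terms are read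
as `0` at an endpoint not covered by `F`. Since `0 ≤ μ ≤ 1` and `μ` is monotone, both increments are
nonnegative; by submodularity of `μ` (and `μ ≤ 1` when only the larger set joins the endpoints)
they decrease as `F` grows, which is submodularity of `g_μ`.

The two group identities come from potentials: if `τ (src f) * ψ f * τ (tgt f)⁻¹ ∈ H` for every
edge `f` and `τ p ∈ H`, then the gain of every closed walk at `p` lies in `H`.
-/

namespace SymPolymatroidal

variable {Γ : Type*} [Group Γ] {μ : Set Γ → ℝ}

theorem nonneg (hμ : SymPolymatroidal μ) (S : Set Γ) : 0 ≤ μ S := hμ.2.1 S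

theorem mono (hμ : SymPolymatroidal μ) : Monotone μ := hμ.2.2.1

theorem submod (hμ : SymPolymatroidal μ) (S T : Set Γ) : μ (S ∪ T) + μ (S ∩ T) ≤ μ S + μ T :=
  hμ.2.2.2.1 S T

theorem closure_eq (hμ : SymPolymatroidal μ) {S : Set Γ} (hS : S.Nonempty) :
    μ (Subgroup.closure S) = μ S :=
  hμ.2.2.2.2.1 S hS

theorem conj_image_eq (hμ : SymPolymatroidal μ) (γ : Γ) {S : Set Γ} (hS : S.Nonempty) :
    μ ((fun x => γ * x * γ⁻¹) '' S) = μ S :=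
  hμ.2.2.2.2.2 S γ hS

end SymPolymatroidal

section SetFunction

variable {α : Type*} {μ : Set α → ℝ}

theorem union_sub_union_le_sub (hmono : Monotone μ)
    (hsub : ∀ S T, μ (S ∪ T) + μ (S ∩ T) ≤ μ S + μ T) {A A' : Set α} (h : A ⊆ A') (C : Set α) :
    μ (A' ∪ C) - μ (A ∪ C) ≤ μ A' - μ A := by
  have hsub' := hsub A' (A ∪ C)
  rw [← Set.union_assoc, Set.union_eq_left.2 h] at hsub'
  have : μ A ≤ μ (A' ∩ (A ∪ C)) := hmono (Set.subset_inter h Set.subset_union_left)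
  linarith

theorem union_sub_union_le_add (hmono : Monotone μ)
    (hsub : ∀ S T, μ (S ∪ T) + μ (S ∩ T) ≤ μ S + μ T) {A A' B B' : Set α}
    (hA : A ⊆ A') (hB : B ⊆ B') :
    μ (A' ∪ B') - μ (A ∪ B) ≤ (μ A' - μ A) + (μ B' - μ B) := by
  have h₁ := union_sub_union_le_sub hmono hsub hA B'
  have h₂ := union_sub_union_le_sub hmono hsub hB A
  rw [Set.union_comm B', Set.union_comm B] at h₂
  linarith

end SetFunction

namespace GG

variable {V E : Type*} {G : GG V E}

section Walks

variable {X Y : Set E} {u v w : V} {e f : E}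

@[simp] theorem stepHead_true (e : E) : G.stepHead (e, true) = G.src e := rfl
@[simp] theorem stepHead_false (e : E) : G.stepHead (e, false) = G.tgt e := rfl
@[simp] theorem stepLast_true (e : E) : G.stepLast (e, true) = G.tgt e := rfl
@[simp] theorem stepLast_false (e : E) : G.stepLast (e, false) = G.src e := rfl

theorem isWalkFrom_edge (hf : f ∈ X) : G.IsWalkFrom X (G.src f) (G.tgt f) [(f, true)] :=
  .cons hf rfl (.nil _)

theorem IsWalkFrom.append {l₁ l₂ : List (E × Bool)} (h₁ : G.IsWalkFrom X u v l₁)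
    (h₂ : G.IsWalkFrom X v w l₂) : G.IsWalkFrom X u w (l₁ ++ l₂) := by
  induction h₁ with
  | nil => exact h₂
  | cons he h1 _ ih => exact .cons he h1 (ih h₂)

theorem IsWalkFrom.mono (hXY : X ⊆ Y) {l} (h : G.IsWalkFrom X u w l) : G.IsWalkFrom Y u w l := by
  induction h with
  | nil => exact .nil _
  | cons he h1 _ ih => exact .cons (hXY he) h1 ih

def stepRev (s : E × Bool) : E × Bool := (s.1, !s.2)

theorem IsWalkFrom.reverse {l} (h : G.IsWalkFrom X u w l) :
    G.IsWalkFrom X w u (l.map stepRev).reverse := by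
  induction h with
  | nil => exact .nil _
  | @cons _ _ s _ he h1 _ ih =>
    have hrev : G.IsWalkFrom X (G.stepLast s) (G.stepHead s) [stepRev s] := by
      obtain ⟨f, _ | _⟩ := s <;> exact .cons he rfl (.nil _)
    simpa [h1] using ih.append hrev

theorem stepHead_mem_VSet {s : E × Bool} (hs : s.1 ∈ X) : G.stepHead s ∈ G.VSet X := by
  obtain ⟨f, _ | _⟩ := s <;> exact ⟨f, hs, by simp⟩

theorem stepLast_mem_VSet {s : E × Bool} (hs : s.1 ∈ X) : G.stepLast s ∈ G.VSet X := by
  obtain ⟨f, _ | _⟩ := s <;> exact ⟨f, hs, by simp⟩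

theorem IsWalkFrom.eq_or_mem_VSet {l} (h : G.IsWalkFrom X u w l) : w = u ∨ w ∈ G.VSet X := by
  induction h with
  | nil => exact .inl rfl
  | cons hs _ _ ih => exact .inr (ih.elim (· ▸ stepLast_mem_VSet hs) id)

def Reaches (G : GG V E) (X : Set E) (u w : V) : Prop := ∃ l, G.IsWalkFrom X u w l

theorem Reaches.refl (X : Set E) (v : V) : G.Reaches X v v := ⟨[], .nil v⟩

theorem Reaches.symm (h : G.Reaches X u w) : G.Reaches X w u :=
  let ⟨_, hl⟩ := h; ⟨_, hl.reverse⟩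

theorem Reaches.trans (h₁ : G.Reaches X u v) (h₂ : G.Reaches X v w) : G.Reaches X u w :=
  let ⟨_, hl₁⟩ := h₁; let ⟨_, hl₂⟩ := h₂; ⟨_, hl₁.append hl₂⟩

theorem Reaches.mono (hXY : X ⊆ Y) (h : G.Reaches X u w) : G.Reaches Y u w :=
  let ⟨l, hl⟩ := h; ⟨l, hl.mono hXY⟩

theorem reaches_src_tgt (hf : f ∈ X) : G.Reaches X (G.src f) (G.tgt f) := ⟨_, isWalkFrom_edge hf⟩

theorem Reaches.eq_or_mem_VSet (h : G.Reaches X u w) : w = u ∨ w ∈ G.VSet X :=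
  let ⟨_, hl⟩ := h; hl.eq_or_mem_VSet

theorem reaches_src_iff_reaches_tgt (hf : f ∈ X) :
    G.Reaches X u (G.src f) ↔ G.Reaches X u (G.tgt f) :=
  ⟨(·.trans (reaches_src_tgt hf)), (·.trans (reaches_src_tgt hf).symm)⟩

theorem reaches_stepHead_stepLast {s : E × Bool} (hs : s.1 ∈ X) :
    G.Reaches X (G.stepHead s) (G.stepLast s) := by
  obtain ⟨f, _ | _⟩ := s
  · exact (reaches_src_tgt hs).symm
  · exact reaches_src_tgt hs

theorem Reaches.of_insert (h : G.Reaches (insert e X) u w) :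
    G.Reaches X u w ∨ (G.Reaches X u (G.src e) ∧ G.Reaches X (G.tgt e) w) ∨
      (G.Reaches X u (G.tgt e) ∧ G.Reaches X (G.src e) w) := by
  obtain ⟨l, hl⟩ := h
  induction hl with
  | nil => exact .inl (.refl X _)
  | @cons u w s l hs h1 _ ih =>
    subst h1
    rcases hs with rfl | hs
    · have := Reaches.refl (G := G) X (G.src s.1)
      have := Reaches.refl (G := G) X (G.tgt s.1)
      obtain ⟨f, _ | _⟩ := s <;> simp only [stepHead, stepLast] at ih ⊢ <;> tauto
    · have hstep := reaches_stepHead_stepLast (G := G) hs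
      rcases ih with h | ⟨h, h'⟩ | ⟨h, h'⟩
      · exact .inl (hstep.trans h)
      · exact .inr (.inl ⟨hstep.trans h, h'⟩)
      · exact .inr (.inr ⟨hstep.trans h, h'⟩)

end Walks

section WalkGroups

variable {X Y : Set E} {u v w p : V} {e f : E}

def CompAt (G : GG V E) (X : Set E) (v : V) : Set E := {f | f ∈ X ∧ G.Reaches X v (G.src f)}

theorem IsWalkFrom.compAt {l} (h : G.IsWalkFrom X u w l) (hv : G.Reaches X v u) :
    G.IsWalkFrom (G.CompAt X v) u w l := by
  induction h with
  | nil => exact .nil _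
  | @cons u _ s _ hs h1 _ ih =>
    subst h1
    have hlast : G.Reaches X v (G.stepLast s) := hv.trans (reaches_stepHead_stepLast hs)
    refine .cons ⟨hs, ?_⟩ rfl (ih hlast)
    obtain ⟨f, _ | _⟩ := s
    · exact hlast
    · exact hv

theorem compAt_subset_of_not_reaches (hp : ¬ G.Reaches X v (G.src e))
    (hq : ¬ G.Reaches X v (G.tgt e)) : G.CompAt (insert e X) v ⊆ X := by
  rintro f ⟨rfl | hf, hr⟩
  · rcases hr.of_insert with h | ⟨h, -⟩ | ⟨h, -⟩ <;> contradiction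
  · exact hf

variable {Γ : Type*} [Group Γ] {ψ : E → Γ}

theorem gainOf_append (l₁ l₂ : List (E × Bool)) :
    gainOf ψ (l₁ ++ l₂) = gainOf ψ l₁ * gainOf ψ l₂ := by
  induction l₁ with
  | nil => simp [gainOf]
  | cons s l ih => simp [gainOf, ih, mul_assoc]

@[simp] theorem gainOf_edge (e : E) : gainOf ψ [(e, true)] = ψ e := by simp [gainOf]

theorem gainOf_reverse (l : List (E × Bool)) :
    gainOf ψ (l.map stepRev).reverse = (gainOf ψ l)⁻¹ := by
  induction l with
  | nil => simp [gainOf]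
  | cons s l ih =>
    obtain ⟨f, _ | _⟩ := s <;> simp [gainOf, gainOf_append, ih, stepRev]

theorem gainOf_mem_walkGroup {l} (h : G.IsWalkFrom X v v l) : gainOf ψ l ∈ G.walkGroup ψ X v :=
  Subgroup.subset_closure ⟨l, h, rfl⟩

theorem gainOf_mul_mul_inv_mem_walkGroup {a l b} (ha : G.IsWalkFrom X p u a)
    (hl : G.IsWalkFrom X u w l) (hb : G.IsWalkFrom X p w b) :
    gainOf ψ a * gainOf ψ l * (gainOf ψ b)⁻¹ ∈ G.walkGroup ψ X p := by
  simpa [gainOf_append, gainOf_reverse, mul_assoc] using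
    gainOf_mem_walkGroup (ψ := ψ) ((ha.append hl).append hb.reverse)

theorem walkGroup_mono (hXY : X ⊆ Y) : G.walkGroup ψ X v ≤ G.walkGroup ψ Y v :=
  Subgroup.closure_mono fun _ ⟨l, hl, hg⟩ => ⟨l, hl.mono hXY, hg⟩

theorem walkGroup_eq_bot (hv : v ∉ G.VSet X) : G.walkGroup ψ X v = ⊥ := by
  refine (Subgroup.closure_eq_bot_iff).2 ?_
  rintro _ ⟨l, hl, rfl⟩
  cases hl with
  | nil => rfl
  | cons hs h1 _ => exact absurd (h1 ▸ stepHead_mem_VSet hs) hv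

theorem walkGroup_compAt : G.walkGroup ψ (G.CompAt X v) v = G.walkGroup ψ X v :=
  le_antisymm (walkGroup_mono fun _ hf => hf.1) <|
    (Subgroup.closure_le _).2 fun _ ⟨_, hl, hg⟩ => hg ▸ gainOf_mem_walkGroup (hl.compAt (.refl X v))

theorem walkGroup_insert_of_not_reaches_src_tgt (hp : ¬ G.Reaches X v (G.src e))
    (hq : ¬ G.Reaches X v (G.tgt e)) : G.walkGroup ψ (insert e X) v = G.walkGroup ψ X v := by
  refine le_antisymm ?_ (walkGroup_mono (Set.subset_insert e X))
  rw [← walkGroup_compAt]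
  exact walkGroup_mono (compAt_subset_of_not_reaches hp hq)

theorem conj_mem_walkGroup {l} (hl : G.IsWalkFrom Y p u l) (hXY : X ⊆ Y) {x : Γ}
    (hx : x ∈ G.walkGroup ψ X u) : gainOf ψ l * x * (gainOf ψ l)⁻¹ ∈ G.walkGroup ψ Y p := by
  suffices G.walkGroup ψ X u ≤ (G.walkGroup ψ Y p).comap (MulAut.conj (gainOf ψ l)).toMonoidHom
    from this hx
  refine (Subgroup.closure_le _).2 ?_
  rintro _ ⟨m, hm, rfl⟩
  exact gainOf_mul_mul_inv_mem_walkGroup hl (hm.mono hXY) hl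

theorem coe_walkGroup_eq_image {l} (hl : G.IsWalkFrom X u v l) :
    (G.walkGroup ψ X v : Set Γ) =
      (fun x => (gainOf ψ l)⁻¹ * x * ((gainOf ψ l)⁻¹)⁻¹) '' G.walkGroup ψ X u := by
  ext y
  refine ⟨fun hy => ⟨_, conj_mem_walkGroup hl subset_rfl hy, by group⟩, ?_⟩
  rintro ⟨x, hx, rfl⟩
  simpa [gainOf_reverse] using conj_mem_walkGroup hl.reverse subset_rfl hx

theorem mu_walkGroup_eq_of_reaches {μ : Set Γ → ℝ} (hμ : SymPolymatroidal μ)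
    (h : G.Reaches X u v) : μ (G.walkGroup ψ X v) = μ (G.walkGroup ψ X u) := by
  obtain ⟨l, hl⟩ := h
  rw [coe_walkGroup_eq_image hl, hμ.conj_image_eq _ ⟨1, one_mem _⟩]

end WalkGroups

section WalkGroupInsert

variable {X C : Set E} {u v w p : V} {e f : E}
variable {Γ : Type*} [Group Γ] {ψ : E → Γ}

section Potential

variable {H : Subgroup Γ} {R : V → Prop} {τ : V → Γ}

/-- `τ` is a potential for `ψ` modulo `H` on the vertices satisfying `R`: the gain of each
edge is `τ (src f)⁻¹ * h * τ (tgt f)` with `h ∈ H`, and these telescope along a walk. -/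
theorem IsWalkFrom.potential_mem (hR : ∀ f ∈ X, R (G.src f) ↔ R (G.tgt f))
    (hτ : ∀ f ∈ X, R (G.src f) → τ (G.src f) * ψ f * (τ (G.tgt f))⁻¹ ∈ H) {l}
    (hl : G.IsWalkFrom X u w l) (hu : R u) : τ u * gainOf ψ l * (τ w)⁻¹ ∈ H := by
  induction hl with
  | nil => simp [gainOf]
  | @cons _ _ s l hs h1 _ ih =>
    subst h1
    obtain ⟨f, _ | _⟩ := s
    · have hf := (hR f hs).2 hu
      convert mul_mem (inv_mem (hτ f hs hf)) (ih hf) using 1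
      simp [gainOf]
      group
    · have hf := (hR f hs).1 hu
      convert mul_mem (hτ f hs hu) (ih hf) using 1
      simp [gainOf]
      group

theorem walkGroup_le_of_potential (hR : ∀ f ∈ X, R (G.src f) ↔ R (G.tgt f))
    (hτ : ∀ f ∈ X, R (G.src f) → τ (G.src f) * ψ f * (τ (G.tgt f))⁻¹ ∈ H)
    (hp : R p) (hτp : τ p ∈ H) : G.walkGroup ψ X p ≤ H := by
  refine (Subgroup.closure_le _).2 ?_
  rintro _ ⟨l, hl, rfl⟩
  show gainOf ψ l ∈ H
  convert mul_mem (mul_mem (inv_mem hτp) (hl.potential_mem hR hτ hp)) hτp using 1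
  group

end Potential

open Classical in
noncomputable def someWalk (G : GG V E) (X : Set E) (p v : V) : List (E × Bool) :=
  if h : G.Reaches X p v then h.choose else []

theorem Reaches.isWalkFrom_someWalk (h : G.Reaches X p v) :
    G.IsWalkFrom X p v (G.someWalk X p v) := by
  rw [someWalk, dif_pos h]
  exact h.choose_spec

theorem someWalk_cycle_mem (hf : f ∈ X) (h : G.Reaches X p (G.src f)) :
    gainOf ψ (G.someWalk X p (G.src f)) * ψ f * (gainOf ψ (G.someWalk X p (G.tgt f)))⁻¹ ∈
      G.walkGroup ψ X p := by
  simpa using gainOf_mul_mul_inv_mem_walkGroup (ψ := ψ) h.isWalkFrom_someWalk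
    (isWalkFrom_edge hf) (h.trans (reaches_src_tgt hf)).isWalkFrom_someWalk

theorem someWalk_self_mem : gainOf ψ (G.someWalk X p p) ∈ G.walkGroup ψ X p :=
  gainOf_mem_walkGroup (Reaches.refl X p).isWalkFrom_someWalk

theorem walkGroup_insert_of_isWalkFrom {W} (hW : G.IsWalkFrom C (G.tgt e) (G.src e) W) :
    G.walkGroup ψ (insert e C) (G.src e) =
      Subgroup.closure (G.walkGroup ψ C (G.src e) ∪ {ψ e * gainOf ψ W}) := by
  set H := Subgroup.closure (G.walkGroup ψ C (G.src e) ∪ {ψ e * gainOf ψ W})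
  have hCH : G.walkGroup ψ C (G.src e) ≤ H := fun _ hx => Subgroup.subset_closure (.inl hx)
  have hγ : ψ e * gainOf ψ W ∈ H := Subgroup.subset_closure (Set.mem_union_right _ rfl)
  refine le_antisymm ?_ ((Subgroup.closure_le _).2 (Set.union_subset
    (walkGroup_mono (Set.subset_insert e C)) ?_))
  · have hqp : G.Reaches C (G.src e) (G.tgt e) := Reaches.symm ⟨W, hW⟩
    refine walkGroup_le_of_potential (R := G.Reaches C (G.src e))
      (τ := fun v => gainOf ψ (G.someWalk C (G.src e) v)) ?_ ?_ (.refl C _)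
      (hCH someWalk_self_mem)
    · rintro f (rfl | hf)
      · exact iff_of_true (.refl C _) hqp
      · exact reaches_src_iff_reaches_tgt hf
    · rintro f (rfl | hf) hp
      · have hcyc := gainOf_mem_walkGroup (ψ := ψ) (hqp.isWalkFrom_someWalk.append hW)
        rw [gainOf_append] at hcyc
        convert mul_mem (mul_mem (hCH someWalk_self_mem) hγ) (inv_mem (hCH hcyc)) using 1
        group
      · exact hCH (someWalk_cycle_mem hf hp)
  · rw [Set.singleton_subset_iff, SetLike.mem_coe]
    have hcyc : G.IsWalkFrom (insert e C) (G.src e) (G.src e) ((e, true) :: W) :=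
      .cons (Set.mem_insert e C) rfl (hW.mono (Set.subset_insert e C))
    simpa [gainOf] using gainOf_mem_walkGroup (ψ := ψ) hcyc

theorem walkGroup_insert_of_not_reaches (h : ¬ G.Reaches C (G.tgt e) (G.src e)) :
    G.walkGroup ψ (insert e C) (G.src e) =
      Subgroup.closure (G.walkGroup ψ C (G.src e) ∪
        (fun x => ψ e * x * (ψ e)⁻¹) '' G.walkGroup ψ C (G.tgt e)) := by
  classical
  set H := Subgroup.closure (G.walkGroup ψ C (G.src e) ∪
    (fun x => ψ e * x * (ψ e)⁻¹) '' G.walkGroup ψ C (G.tgt e))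
  have hCH : G.walkGroup ψ C (G.src e) ≤ H := fun _ hx => Subgroup.subset_closure (.inl hx)
  have hconj {x} (hx : x ∈ G.walkGroup ψ C (G.tgt e)) : ψ e * x * (ψ e)⁻¹ ∈ H :=
    Subgroup.subset_closure (Set.mem_union_right _ ⟨x, hx, rfl⟩)
  refine le_antisymm ?_ ((Subgroup.closure_le _).2 (Set.union_subset
    (walkGroup_mono (Set.subset_insert e C)) ?_))
  · refine walkGroup_le_of_potential
      (R := fun v => G.Reaches C (G.src e) v ∨ G.Reaches C (G.tgt e) v)
      (τ := fun v => if G.Reaches C (G.src e) v then gainOf ψ (G.someWalk C (G.src e) v)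
        else ψ e * gainOf ψ (G.someWalk C (G.tgt e) v)) ?_ ?_ (.inl (.refl C _)) ?_
    · rintro f (rfl | hf)
      · exact iff_of_true (.inl (.refl C _)) (.inr (.refl C _))
      · exact or_congr (reaches_src_iff_reaches_tgt hf) (reaches_src_iff_reaches_tgt hf)
    · rintro f (rfl | hf) hsrc
      · have hpq : ¬ G.Reaches C (G.src f) (G.tgt f) := fun h' => h h'.symm
        simp only [Reaches.refl, if_true, hpq, if_false]
        convert mul_mem (hCH someWalk_self_mem) (hconj (inv_mem someWalk_self_mem)) using 1
        group
      · by_cases hs : G.Reaches C (G.src e) (G.src f)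
        · simp only [hs, (reaches_src_iff_reaches_tgt hf).1 hs, if_true]
          exact hCH (someWalk_cycle_mem hf hs)
        · simp only [hs, mt (reaches_src_iff_reaches_tgt hf).2 hs, if_false]
          convert hconj (someWalk_cycle_mem hf (hsrc.resolve_left hs)) using 1
          group
    · rw [if_pos (.refl C _)]
      exact hCH someWalk_self_mem
  · rintro _ ⟨x, hx, rfl⟩
    simpa using conj_mem_walkGroup (isWalkFrom_edge (Set.mem_insert e C))
      (Set.subset_insert e C) hx

end WalkGroupInsert

section Components

variable {F : Finset E} {u v : V}

theorem compRel_equivalence (F : Finset E) : Equivalence (G.compRel F) where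
  refl _ := Reaches.refl (G := G) _ _
  symm := Reaches.symm
  trans := Reaches.trans

theorem quot_mk_eq_iff {x y : F} :
    Quot.mk (G.compRel F) x = Quot.mk _ y ↔ G.Reaches F (G.src x) (G.src y) :=
  ⟨fun h => (compRel_equivalence F).eqvGen_iff.1 (Quot.eqvGen_exact h), fun h => Quot.sound h⟩

noncomputable instance (F : Finset E) : Fintype (Quot (G.compRel F)) := Fintype.ofFinite _

def Touches (G : GG V E) (F : Finset E) (c : Quot (G.compRel F)) (v : V) : Prop :=
  G.Reaches F (G.src c.out) v

theorem touches_mk_iff {x : F} : G.Touches F (Quot.mk _ x) v ↔ G.Reaches F (G.src x) v := by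
  have h := quot_mk_eq_iff.1 (Quot.out_eq (Quot.mk (G.compRel F) x))
  exact ⟨h.symm.trans, h.trans⟩

theorem Touches.eq {c c' : Quot (G.compRel F)} (h : G.Touches F c v) (h' : G.Touches F c' v) :
    c = c' := by
  rw [← Quot.out_eq c, ← Quot.out_eq c']
  exact quot_mk_eq_iff.2 (h.trans h'.symm)

theorem touches_iff_of_reaches {c : Quot (G.compRel F)} (h : G.Reaches F u v) :
    G.Touches F c u ↔ G.Touches F c v :=
  ⟨(·.trans h), (·.trans h.symm)⟩

open Classical in
noncomputable def vertexComps (G : GG V E) (F : Finset E) (v : V) : Finset (Quot (G.compRel F)) :=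
  Finset.univ.filter (G.Touches F · v)

theorem mem_vertexComps {c : Quot (G.compRel F)} : c ∈ G.vertexComps F v ↔ G.Touches F c v := by
  simp [vertexComps]

variable {Γ : Type*} [Group Γ] {ψ : E → Γ} {μ : Set Γ → ℝ}

noncomputable def compMu (G : GG V E) (ψ : E → Γ) (μ : Set Γ → ℝ) (F : Finset E)
    (c : Quot (G.compRel F)) : ℝ :=
  μ (G.walkGroup ψ F (G.src c.out))

theorem compMu_eq_of_touches (hμ : SymPolymatroidal μ) {c : Quot (G.compRel F)}
    (h : G.Touches F c v) : G.compMu ψ μ F c = μ (G.walkGroup ψ F v) :=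
  (mu_walkGroup_eq_of_reaches hμ h).symm

variable [DecidableEq V]

theorem mem_vertexFinset_iff : v ∈ G.vertexFinset F ↔ v ∈ G.VSet F := by
  simp only [vertexFinset, VSet, Finset.mem_union, Finset.mem_image,
    Finset.mem_coe]
  grind

theorem Touches.mem_vertexFinset {c : Quot (G.compRel F)} (h : G.Touches F c v) :
    v ∈ G.vertexFinset F := by
  rcases h.eq_or_mem_VSet with rfl | hv
  · exact Finset.mem_union_left _ (Finset.mem_image_of_mem _ c.out.2)
  · exact mem_vertexFinset_iff.2 hv

theorem exists_touches (hv : v ∈ G.vertexFinset F) : ∃ c, G.Touches F c v := by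
  simp only [vertexFinset, Finset.mem_union, Finset.mem_image] at hv
  rcases hv with ⟨f, hf, rfl⟩ | ⟨f, hf, rfl⟩
  · exact ⟨Quot.mk _ ⟨f, hf⟩, touches_mk_iff.2 (.refl _ _)⟩
  · exact ⟨Quot.mk _ ⟨f, hf⟩, touches_mk_iff.2 (reaches_src_tgt hf)⟩

theorem gMu_eq_card_add_sum (G : GG V E) (ψ : E → Γ) (μ : Set Γ → ℝ) (F : Finset E) :
    G.gMu ψ μ F = (G.vertexFinset F).card + ∑ c, (G.compMu ψ μ F c - 1) := by
  have hcomp (c : Quot (G.compRel F)) :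
      G.walkGroup ψ (G.compCl F c.out) (G.src c.out) = G.walkGroup ψ F (G.src c.out) :=
    walkGroup_compAt
  simp only [gMu, numComp, hcomp, finsum_eq_sum_of_fintype, Nat.card_eq_fintype_card,
    Finset.sum_sub_distrib, compMu, Finset.sum_const, Finset.card_univ, nsmul_eq_mul, mul_one]
  ring

/-- `μ⟨X⟩` for the component `X` of `F` at `v` (closed walks at `v` stay in `X`), and `0` when
`F` does not cover `v`. -/
noncomputable def muAt (G : GG V E) (ψ : E → Γ) (μ : Set Γ → ℝ) (F : Finset E) (v : V) : ℝ :=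
  if v ∈ G.vertexFinset F then μ (G.walkGroup ψ F v) else 0

theorem sum_vertexComps (hμ : SymPolymatroidal μ) (F : Finset E) (v : V) :
    ∑ c ∈ G.vertexComps F v, (G.compMu ψ μ F c - 1) =
      G.muAt ψ μ F v - if v ∈ G.vertexFinset F then 1 else 0 := by
  by_cases hv : v ∈ G.vertexFinset F
  · obtain ⟨c, hc⟩ := exists_touches hv
    have : G.vertexComps F v = {c} := by
      ext c'
      simp only [mem_vertexComps, Finset.mem_singleton]
      exact ⟨(·.eq hc), (· ▸ hc)⟩
    simp [this, muAt, hv, compMu_eq_of_touches hμ hc]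
  · have : G.vertexComps F v = ∅ := by
      ext c'
      simpa [mem_vertexComps] using fun h => hv h.mem_vertexFinset
    simp [this, muAt, hv]

end Components

section ComponentInsert

variable {F : Finset E} {v : V} {e : E}

def compMap {F₁ F₂ : Finset E} (h : F₁ ⊆ F₂) : Quot (G.compRel F₁) → Quot (G.compRel F₂) :=
  Quot.lift (fun x => Quot.mk _ ⟨x, h x.2⟩) fun _ _ hxy => Quot.sound (Reaches.mono (by simpa) hxy)

open Classical in
noncomputable def edgeComps (G : GG V E) (F : Finset E) (e : E) : Finset (Quot (G.compRel F)) :=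
  Finset.univ.filter fun c => G.Touches F c (G.src e) ∨ G.Touches F c (G.tgt e)

theorem mem_edgeComps {c : Quot (G.compRel F)} :
    c ∈ G.edgeComps F e ↔ G.Touches F c (G.src e) ∨ G.Touches F c (G.tgt e) := by
  simp [edgeComps]

variable [DecidableEq E]

def edgeComp (G : GG V E) (F : Finset E) (e : E) : Quot (G.compRel (insert e F)) :=
  Quot.mk _ ⟨e, Finset.mem_insert_self e F⟩

theorem reaches_insert_of_touches {x : F} (h : G.Touches F (Quot.mk _ x) (G.src e) ∨
    G.Touches F (Quot.mk _ x) (G.tgt e)) : G.Reaches ↑(insert e F) (G.src x) (G.src e) := by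
  simp only [touches_mk_iff] at h
  rw [Finset.coe_insert]
  rcases h with h | h
  · exact h.mono (Set.subset_insert e F)
  · exact (h.mono (Set.subset_insert e F)).trans (reaches_src_tgt (Set.mem_insert e F)).symm

theorem reaches_of_reaches_insert {x : F} (hx : Quot.mk _ x ∉ G.edgeComps F e)
    (h : G.Reaches ↑(insert e F) (G.src x) v) : G.Reaches F (G.src x) v := by
  rw [mem_edgeComps, touches_mk_iff, touches_mk_iff] at hx
  rw [Finset.coe_insert] at h
  rcases h.of_insert with h | ⟨h, -⟩ | ⟨h, -⟩
  · exact h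
  all_goals exact absurd h (by tauto)

theorem compMap_eq_edgeComp_iff {c : Quot (G.compRel F)} :
    compMap (Finset.subset_insert e F) c = G.edgeComp F e ↔ c ∈ G.edgeComps F e := by
  obtain ⟨x, rfl⟩ := Quot.exists_rep c
  refine ⟨fun h => ?_,
    fun h => (quot_mk_eq_iff (G := G)).2 (reaches_insert_of_touches (mem_edgeComps.1 h))⟩
  by_contra hx
  exact hx (mem_edgeComps.2 (.inl (touches_mk_iff.2
    (reaches_of_reaches_insert hx (quot_mk_eq_iff.1 h)))))

theorem compMap_injOn :
    Set.InjOn (compMap (G := G) (Finset.subset_insert e F)) {c | c ∉ G.edgeComps F e} := by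
  intro c hc c' _ h
  obtain ⟨x, rfl⟩ := Quot.exists_rep c
  obtain ⟨x', rfl⟩ := Quot.exists_rep c'
  exact quot_mk_eq_iff.2 (reaches_of_reaches_insert hc (quot_mk_eq_iff.1 h))

theorem compMap_surjOn : Set.SurjOn (compMap (G := G) (Finset.subset_insert e F))
    {c | c ∉ G.edgeComps F e} {c' | c' ≠ G.edgeComp F e} := by
  rintro c' hc'
  obtain ⟨⟨x, hx⟩, rfl⟩ := Quot.exists_rep c'
  rcases Finset.mem_insert.1 hx with rfl | hxF
  · exact absurd rfl hc'
  · exact ⟨Quot.mk _ ⟨x, hxF⟩, fun h => hc' (compMap_eq_edgeComp_iff.2 h), rfl⟩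

variable {Γ : Type*} [Group Γ] {ψ : E → Γ} {μ : Set Γ → ℝ}

theorem compMu_compMap (hμ : SymPolymatroidal μ) {c : Quot (G.compRel F)}
    (hc : c ∉ G.edgeComps F e) :
    G.compMu ψ μ (insert e F) (compMap (Finset.subset_insert e F) c) = G.compMu ψ μ F c := by
  obtain ⟨x, rfl⟩ := Quot.exists_rep c
  have hx : G.Touches F (Quot.mk _ x) (G.src x) := touches_mk_iff.2 (.refl _ _)
  have hx' : G.Touches (insert e F) (compMap (Finset.subset_insert e F) (Quot.mk _ x)) (G.src x) :=
    touches_mk_iff.2 (.refl _ _)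
  rw [mem_edgeComps, touches_mk_iff, touches_mk_iff] at hc
  rw [compMu_eq_of_touches hμ hx, compMu_eq_of_touches hμ hx', Finset.coe_insert,
    walkGroup_insert_of_not_reaches_src_tgt (fun h => hc (.inl h)) (fun h => hc (.inr h))]

theorem sum_comps_insert (a : Quot (G.compRel (insert e F)) → ℝ) (b : Quot (G.compRel F) → ℝ)
    (hab : ∀ c ∉ G.edgeComps F e, a (compMap (Finset.subset_insert e F) c) = b c) :
    ∑ c', a c' + ∑ c ∈ G.edgeComps F e, b c = a (G.edgeComp F e) + ∑ c, b c := by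
  classical
  rw [← Finset.add_sum_erase _ _ (Finset.mem_univ (G.edgeComp F e)),
    ← Finset.sum_compl_add_sum (G.edgeComps F e) b, add_assoc]
  congr 2
  refine (Finset.sum_nbij (compMap (Finset.subset_insert e F)) ?_ ?_ ?_ ?_).symm
  · intro c hc
    simpa [compMap_eq_edgeComp_iff] using hc
  · exact fun c hc c' hc' => compMap_injOn (by simpa using hc) (by simpa using hc')
  · intro c' hc'
    obtain ⟨c, hc, rfl⟩ := compMap_surjOn (by simpa using hc')
    exact ⟨c, by simpa using hc, rfl⟩
  · exact fun c hc => (hab c (by simpa using hc)).symm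

variable [DecidableEq V]

theorem gMu_insert (hμ : SymPolymatroidal μ) : G.gMu ψ μ (insert e F) = G.gMu ψ μ F
    + ((G.vertexFinset (insert e F)).card - (G.vertexFinset F).card)
    + (μ (G.walkGroup ψ ↑(insert e F) (G.src e)) - 1)
    - ∑ c ∈ G.edgeComps F e, (G.compMu ψ μ F c - 1) := by
  have he : G.compMu ψ μ (insert e F) (G.edgeComp F e) =
      μ (G.walkGroup ψ ↑(insert e F) (G.src e)) :=
    compMu_eq_of_touches hμ (touches_mk_iff.2 (.refl _ _))
  have hsum := sum_comps_insert (fun c => G.compMu ψ μ (insert e F) c - 1)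
    (fun c => G.compMu ψ μ F c - 1) fun c hc => by rw [compMu_compMap hμ hc]
  rw [gMu_eq_card_add_sum, gMu_eq_card_add_sum]
  simp only [he] at hsum
  linarith

end ComponentInsert

section Increments

variable [DecidableEq V] {F X Y : Finset E} {u v : V}
variable {Γ : Type*} [Group Γ] {ψ : E → Γ} {μ : Set Γ → ℝ}

theorem muAt_le_one (hμ1 : ∀ S : Set Γ, μ S ≤ 1) : G.muAt ψ μ F v ≤ 1 := by
  unfold muAt
  split_ifs
  exacts [hμ1 _, zero_le_one]

theorem muAt_le (hμ : SymPolymatroidal μ) : G.muAt ψ μ F v ≤ μ (G.walkGroup ψ F v) := by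
  unfold muAt
  split_ifs
  exacts [le_rfl, hμ.nonneg _]

theorem muAt_eq_of_reaches (hμ : SymPolymatroidal μ) (h : G.Reaches F u v) :
    G.muAt ψ μ F u = G.muAt ψ μ F v := by
  rcases h.eq_or_mem_VSet with rfl | hv
  · rfl
  rcases h.symm.eq_or_mem_VSet with rfl | hu
  · rfl
  simp [muAt, mem_vertexFinset_iff.2 hu, mem_vertexFinset_iff.2 hv,
    mu_walkGroup_eq_of_reaches hμ h]

theorem sub_le_muAt_sub (hμ : SymPolymatroidal μ) (hXY : X ⊆ Y) (v : V) :
    μ (G.walkGroup ψ Y v) - μ (G.walkGroup ψ X v) ≤ G.muAt ψ μ Y v - G.muAt ψ μ X v := by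
  have hV : G.vertexFinset X ⊆ G.vertexFinset Y :=
    Finset.union_subset_union (Finset.image_subset_image hXY) (Finset.image_subset_image hXY)
  by_cases hX : v ∈ G.vertexFinset X
  · simp [muAt, hX, hV hX]
  by_cases hY : v ∈ G.vertexFinset Y
  · simp [muAt, hX, hY, hμ.nonneg]
  have hbot {Z : Finset E} (hZ : v ∉ G.vertexFinset Z) : G.walkGroup ψ Z v = ⊥ :=
    walkGroup_eq_bot (mt mem_vertexFinset_iff.2 hZ)
  simp [muAt, hX, hY, hbot hX, hbot hY]

theorem muAt_mono (hμ : SymPolymatroidal μ) (hXY : X ⊆ Y) (v : V) :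
    G.muAt ψ μ X v ≤ G.muAt ψ μ Y v := by
  have := sub_le_muAt_sub (G := G) (ψ := ψ) hμ hXY v
  have := hμ.mono (walkGroup_mono (ψ := ψ) (v := v) (G := G) (Finset.coe_subset.2 hXY))
  linarith

variable [DecidableEq E] {e : E}

theorem vertexFinset_insert (F : Finset E) (e : E) :
    G.vertexFinset (insert e F) = insert (G.src e) (insert (G.tgt e) (G.vertexFinset F)) := by
  ext
  simp only [vertexFinset, Finset.image_insert, Finset.mem_union, Finset.mem_insert]
  tauto

theorem gMu_insert_of_isWalkFrom (hμ : SymPolymatroidal μ) {W}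
    (hW : G.IsWalkFrom F (G.tgt e) (G.src e) W) :
    G.gMu ψ μ (insert e F) = G.gMu ψ μ F
      + μ (G.walkGroup ψ F (G.src e) ∪ {ψ e * gainOf ψ W}) - G.muAt ψ μ F (G.src e) := by
  have hqp : G.Reaches F (G.tgt e) (G.src e) := ⟨W, hW⟩
  have hcomps : G.edgeComps F e = G.vertexComps F (G.src e) := by
    ext c
    simp [mem_edgeComps, mem_vertexComps, touches_iff_of_reaches hqp]
  have hgrp : μ (G.walkGroup ψ ↑(insert e F) (G.src e)) =
      μ (G.walkGroup ψ F (G.src e) ∪ {ψ e * gainOf ψ W}) := by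
    rw [Finset.coe_insert, walkGroup_insert_of_isWalkFrom hW,
      hμ.closure_eq ⟨1, .inl (one_mem _)⟩]
  have hcard : ((G.vertexFinset (insert e F)).card : ℝ) =
      (G.vertexFinset F).card + if G.src e ∈ G.vertexFinset F then 0 else 1 := by
    rw [vertexFinset_insert]
    split_ifs with hp
    · rcases hqp.symm.eq_or_mem_VSet with hq | hq
      · rw [hq, Finset.insert_eq_of_mem hp, Finset.insert_eq_of_mem hp, add_zero]
      · rw [Finset.insert_eq_of_mem (mem_vertexFinset_iff.2 hq), Finset.insert_eq_of_mem hp,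
          add_zero]
    · have hq : G.tgt e = G.src e :=
        (hqp.eq_or_mem_VSet.resolve_right (mt mem_vertexFinset_iff.2 hp)).symm
      rw [hq, Finset.insert_idem, Finset.card_insert_of_notMem hp, Nat.cast_succ]
  rw [gMu_insert hμ, hcomps, sum_vertexComps hμ, hgrp, hcard]
  split_ifs <;> ring

theorem gMu_insert_of_not_reaches (hμ : SymPolymatroidal μ)
    (h : ¬ G.Reaches F (G.tgt e) (G.src e)) :
    G.gMu ψ μ (insert e F) = G.gMu ψ μ F + 1
      + μ (G.walkGroup ψ F (G.src e) ∪ (fun x => ψ e * x * (ψ e)⁻¹) '' G.walkGroup ψ F (G.tgt e))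
      - G.muAt ψ μ F (G.src e) - G.muAt ψ μ F (G.tgt e) := by
  have hpq : G.src e ≠ G.tgt e := fun h' => h (h' ▸ .refl _ _)
  have hdisj : Disjoint (G.vertexComps F (G.src e)) (G.vertexComps F (G.tgt e)) :=
    Finset.disjoint_left.2 fun _ hp hq =>
      h ((mem_vertexComps.1 hq).symm.trans (mem_vertexComps.1 hp))
  have hcomps : G.edgeComps F e = (G.vertexComps F (G.src e)).disjUnion _ hdisj := by
    ext c
    simp [mem_edgeComps, mem_vertexComps]
  have hgrp : μ (G.walkGroup ψ ↑(insert e F) (G.src e)) = μ (G.walkGroup ψ F (G.src e) ∪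
      (fun x => ψ e * x * (ψ e)⁻¹) '' G.walkGroup ψ F (G.tgt e)) := by
    rw [Finset.coe_insert, walkGroup_insert_of_not_reaches h,
      hμ.closure_eq ⟨1, .inl (one_mem _)⟩]
  have hcard : ((G.vertexFinset (insert e F)).card : ℝ) = (G.vertexFinset F).card
      + (if G.src e ∈ G.vertexFinset F then 0 else 1)
      + (if G.tgt e ∈ G.vertexFinset F then 0 else 1) := by
    rw [vertexFinset_insert, Finset.card_insert_eq_ite, Finset.card_insert_eq_ite]
    simp only [Finset.mem_insert, hpq, false_or]
    split_ifs <;> push_cast <;> ring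
  rw [gMu_insert hμ, hcomps, Finset.sum_disjUnion, sum_vertexComps hμ, sum_vertexComps hμ, hgrp,
    hcard]
  split_ifs <;> ring

end Increments

section Submodularity

variable [DecidableEq V] [DecidableEq E] {X Y : Finset E}
variable {Γ : Type*} [Group Γ] {ψ : E → Γ} {μ : Set Γ → ℝ}

theorem gMu_le_gMu_insert (hμ : SymPolymatroidal μ) (hμ1 : ∀ S : Set Γ, μ S ≤ 1)
    (F : Finset E) (e : E) : G.gMu ψ μ F ≤ G.gMu ψ μ (insert e F) := by
  have hp := muAt_le (G := G) (ψ := ψ) (F := F) (v := G.src e) hμ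
  by_cases h : G.Reaches F (G.tgt e) (G.src e)
  · obtain ⟨W, hW⟩ := h
    rw [gMu_insert_of_isWalkFrom hμ hW]
    have := hμ.mono (Set.subset_union_left (s := (G.walkGroup ψ F (G.src e) : Set Γ))
      (t := {ψ e * gainOf ψ W}))
    linarith
  · rw [gMu_insert_of_not_reaches hμ h]
    have := hμ.mono (Set.subset_union_left (s := (G.walkGroup ψ F (G.src e) : Set Γ))
      (t := (fun x => ψ e * x * (ψ e)⁻¹) '' G.walkGroup ψ F (G.tgt e)))
    have := muAt_le_one (G := G) (ψ := ψ) (F := F) (v := G.tgt e) hμ1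
    linarith

theorem gMu_insert_sub_le (hμ : SymPolymatroidal μ) (hμ1 : ∀ S : Set Γ, μ S ≤ 1) (hXY : X ⊆ Y)
    (e : E) : G.gMu ψ μ (insert e Y) - G.gMu ψ μ Y ≤ G.gMu ψ μ (insert e X) - G.gMu ψ μ X := by
  have hXY' : (X : Set E) ⊆ Y := Finset.coe_subset.2 hXY
  have hA {v : V} : (G.walkGroup ψ X v : Set Γ) ⊆ G.walkGroup ψ Y v := walkGroup_mono hXY'
  have hp := sub_le_muAt_sub (G := G) (ψ := ψ) hμ hXY (G.src e)
  by_cases hY : G.Reaches Y (G.tgt e) (G.src e)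
  · by_cases hX : G.Reaches X (G.tgt e) (G.src e)
    · obtain ⟨W, hW⟩ := hX
      rw [gMu_insert_of_isWalkFrom hμ (hW.mono hXY'), gMu_insert_of_isWalkFrom hμ hW]
      have := union_sub_union_le_sub hμ.mono hμ.submod (hA (v := G.src e)) {ψ e * gainOf ψ W}
      linarith
    · obtain ⟨W, hW⟩ := hY
      rw [gMu_insert_of_isWalkFrom hμ hW, gMu_insert_of_not_reaches hμ hX]
      have := hμ1 (G.walkGroup ψ Y (G.src e) ∪ {ψ e * gainOf ψ W})
      have := hμ.mono (Set.subset_union_left (s := (G.walkGroup ψ X (G.src e) : Set Γ))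
        (t := (fun x => ψ e * x * (ψ e)⁻¹) '' G.walkGroup ψ X (G.tgt e)))
      have := muAt_le (G := G) (ψ := ψ) (F := X) (v := G.src e) hμ
      have := muAt_mono (G := G) (ψ := ψ) hμ hXY (G.tgt e)
      have := muAt_eq_of_reaches (ψ := ψ) hμ ⟨W, hW⟩
      linarith
  · have hX : ¬ G.Reaches X (G.tgt e) (G.src e) := fun h => hY (h.mono hXY')
    rw [gMu_insert_of_not_reaches hμ hY, gMu_insert_of_not_reaches hμ hX]
    have hU := union_sub_union_le_add hμ.mono hμ.submod (hA (v := G.src e))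
      (Set.image_mono (f := fun x => ψ e * x * (ψ e)⁻¹) (hA (v := G.tgt e)))
    have hconj {Z : Finset E} := hμ.conj_image_eq (ψ e) (S := G.walkGroup ψ Z (G.tgt e))
      ⟨1, one_mem _⟩
    rw [hconj, hconj] at hU
    have := sub_le_muAt_sub (G := G) (ψ := ψ) hμ hXY (G.tgt e)
    linarith

theorem monotone_gMu (hμ : SymPolymatroidal μ) (hμ1 : ∀ S : Set Γ, μ S ≤ 1) :
    Monotone (G.gMu ψ μ) := by
  intro F₁ F₂ h
  obtain ⟨D, rfl⟩ : ∃ D, F₂ = F₁ ∪ D := ⟨F₂, (Finset.union_eq_right.2 h).symm⟩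
  clear h
  induction D using Finset.induction_on with
  | empty => simp
  | insert e D _ ih =>
    rw [Finset.union_insert]
    exact ih.trans (gMu_le_gMu_insert hμ hμ1 _ e)

theorem gMu_union_sub_le (hμ : SymPolymatroidal μ) (hμ1 : ∀ S : Set Γ, μ S ≤ 1) (hXY : X ⊆ Y)
    (D : Finset E) : G.gMu ψ μ (Y ∪ D) - G.gMu ψ μ Y ≤ G.gMu ψ μ (X ∪ D) - G.gMu ψ μ X := by
  induction D using Finset.induction_on with
  | empty => simp
  | insert e D _ ih =>
    rw [Finset.union_insert, Finset.union_insert]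
    have := gMu_insert_sub_le (G := G) (ψ := ψ) hμ hμ1
      (Finset.union_subset_union_left (t := D) hXY) e
    linarith

theorem gMu_union_add_gMu_inter_le (hμ : SymPolymatroidal μ) (hμ1 : ∀ S : Set Γ, μ S ≤ 1)
    (F₁ F₂ : Finset E) :
    G.gMu ψ μ (F₁ ∪ F₂) + G.gMu ψ μ (F₁ ∩ F₂) ≤ G.gMu ψ μ F₁ + G.gMu ψ μ F₂ := by
  have := gMu_union_sub_le (G := G) (ψ := ψ) hμ hμ1
    (Finset.inter_subset_right (s₁ := F₁) (s₂ := F₂)) F₁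
  rw [Finset.union_comm, Finset.union_eq_right.2 Finset.inter_subset_left] at this
  linarith

end Submodularity

end GG

theorem gMu_monotone_submodular_general {V E Γ : Type*} [Group Γ]
    [DecidableEq V] [DecidableEq E]
    (G : GG V E) (ψ : E → Γ) (μ : Set Γ → ℝ)
    (hμ : SymPolymatroidal μ) (hμ1 : ∀ X : Set Γ, μ X ≤ 1) :
    (∀ F₁ F₂ : Finset E, F₁ ⊆ F₂ → G.gMu ψ μ F₁ ≤ G.gMu ψ μ F₂) ∧
    (∀ F₁ F₂ : Finset E,
      G.gMu ψ μ (F₁ ∪ F₂) + G.gMu ψ μ (F₁ ∩ F₂) ≤ G.gMu ψ μ F₁ + G.gMu ψ μ F₂) :=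
  ⟨fun _ _ h => GG.monotone_gMu hμ hμ1 h, GG.gMu_union_add_gMu_inter_le hμ hμ1⟩

/-- Theorem 4.2: for a symmetric polymatroidal function `μ : 2^Γ → [0,1]` and a finite
`Γ`-gain graph `(G,ψ)`, the function `g_μ` is monotone and submodular on `2^E`. -/
theorem gMu_monotone_submodular {V E Γ : Type*} [Group Γ]
    [Fintype V] [Fintype E] [DecidableEq V] [DecidableEq E]
    (G : GG V E) (ψ : E → Γ) (μ : Set Γ → ℝ)
    (hμ : SymPolymatroidal μ) (hμ1 : ∀ X : Set Γ, μ X ≤ 1) :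
    (∀ F₁ F₂ : Finset E, F₁ ⊆ F₂ → G.gMu ψ μ F₁ ≤ G.gMu ψ μ F₂) ∧
    (∀ F₁ F₂ : Finset E,
      G.gMu ψ μ (F₁ ∪ F₂) + G.gMu ψ μ (F₁ ∩ F₂) ≤ G.gMu ψ μ F₁ + G.gMu ψ μ F₂) :=
  gMu_monotone_submodular_general G ψ μ hμ hμ1
end

section
/- Let μ: 2^E → ℤ be a monotone submodular function with μ(e) ≥ 0 for all e ∈ E on a finite set E. Define μ̂(F) = min{ Σᵢ μ(Fᵢ) : {F₁,…,F_k} a partition of F into nonempty subsets } for nonempty F, and μ̂(∅)=0. Then μ̂ is monotone and submodular (hence (E, μ̂) is an integer polymatroid). -/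
/-- `P` is a partition of the finset `F` into nonempty parts. -/
def IsPartitionOf {E : Type*} [DecidableEq E] (F : Finset E) (P : Finset (Finset E)) : Prop :=
  (∀ A ∈ P, A.Nonempty) ∧ (P : Set (Finset E)).PairwiseDisjoint id ∧ P.sup id = F

/-- The Dilworth truncation `μ̂(F) = min { Σ_{A ∈ P} μ(A) : P a partition of F }`
(the empty set has the empty partition, giving `μ̂(∅) = 0`). -/
noncomputable def dilworth {E : Type*} [DecidableEq E] (μ : Finset E → ℤ) (F : Finset E) : ℤ :=
  sInf {n : ℤ | ∃ P : Finset (Finset E), IsPartitionOf F P ∧ n = ∑ A ∈ P, μ A}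

/-!
Monotonicity: restricting an optimal partition of `Y` to `X ⊆ Y` cannot raise the cost, since `μ`
is monotone and, by `μ {e} ≥ 0`, nonnegative on the blocks that miss `X`.

Submodularity: start from optimal partitions `P` of `X` and `Q` of `Y` and absorb the blocks `B` of
`Q` one at a time into a partition `R` of the current union. The blocks of `R` meeting `B` are
merged with `B` into one block, and their traces on `B` are added to the partition of the
intersection. Submodularity of `μ`, applied once per merged block, shows that the cost
`∑ R + ∑ S` never exceeds `∑ P + ∑ Q`.
-/

open Finset

namespace Finpartition

variable {E : Type*} [DecidableEq E]

def disjUnion {s t : Finset E} (P : Finpartition s) (Q : Finpartition t) (h : Disjoint s t) :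
    Finpartition (s ∪ t) where
  parts := P.parts ∪ Q.parts
  supIndep := by
    rw [supIndep_iff_pairwiseDisjoint, coe_union, Set.pairwiseDisjoint_union]
    exact ⟨P.disjoint, Q.disjoint, fun A hA B hB _ => h.mono (P.le hA) (Q.le hB)⟩
  sup_parts := by rw [sup_union, P.sup_parts, Q.sup_parts, sup_eq_union]
  bot_notMem := by simp

lemma sum_disjUnion {M : Type*} [AddCommMonoid M] {s t : Finset E} (P : Finpartition s)
    (Q : Finpartition t) (h : Disjoint s t) (f : Finset E → M) :
    ∑ A ∈ (P.disjUnion Q h).parts, f A = ∑ A ∈ P.parts, f A + ∑ A ∈ Q.parts, f A :=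
  sum_union <| disjoint_left.2 fun _A hP hQ =>
    P.ne_bot hP <| (h.mono (P.le hP) (Q.le hQ)).eq_bot_of_self

lemma sum_restrict_eq_sum_filter {M : Type*} [AddCommMonoid M] {s t : Finset E}
    (P : Finpartition s) (ht : t ⊆ s) (f : Finset E → M) :
    ∑ A ∈ (P.restrict ht).parts, f A =
      ∑ A ∈ P.parts with (A ∩ t).Nonempty, f (A ∩ t) := by
  rw [sum_filter]
  calc ∑ A ∈ (P.restrict ht).parts, f A
      = ∑ A ∈ (P.restrict ht).parts, if A.Nonempty then f A else 0 :=
        sum_congr rfl fun A hA => (if_pos (nonempty_of_mem_parts _ hA)).symm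
    _ = _ := sum_restrict P ht _ (by simp)

end Finpartition

section Dilworth

variable {E : Type*} [DecidableEq E] {μ : Finset E → ℤ}

lemma dilworth_eq_sInf_range (μ : Finset E → ℤ) (F : Finset E) :
    dilworth μ F = sInf (Set.range fun P : Finpartition F => ∑ A ∈ P.parts, μ A) := by
  unfold dilworth
  congr 1
  ext n
  constructor
  · rintro ⟨P, ⟨hne, hdisj, hsup⟩, rfl⟩
    exact ⟨⟨P, supIndep_iff_pairwiseDisjoint.2 hdisj, hsup,
      fun h => not_nonempty_empty (hne ⊥ h)⟩, rfl⟩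
  · rintro ⟨P, rfl⟩
    exact ⟨P.parts, ⟨fun A hA => P.nonempty_of_mem_parts hA, P.disjoint, P.sup_parts⟩, rfl⟩

lemma dilworth_le_sum_parts {F : Finset E} (P : Finpartition F) :
    dilworth μ F ≤ ∑ A ∈ P.parts, μ A := by
  rw [dilworth_eq_sInf_range]
  exact csInf_le (Set.finite_range _).bddBelow ⟨P, rfl⟩

lemma exists_sum_parts_eq_dilworth (μ : Finset E → ℤ) (F : Finset E) :
    ∃ P : Finpartition F, ∑ A ∈ P.parts, μ A = dilworth μ F := by
  rw [dilworth_eq_sInf_range]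
  exact (Set.range_nonempty _).csInf_mem (Set.finite_range _)

theorem dilworth_mono (hmono : ∀ X Y : Finset E, X ⊆ Y → μ X ≤ μ Y)
    (hpos : ∀ e : E, 0 ≤ μ {e}) {X Y : Finset E} (hXY : X ⊆ Y) :
    dilworth μ X ≤ dilworth μ Y := by
  obtain ⟨Q, hQ⟩ := exists_sum_parts_eq_dilworth μ Y
  have hnonneg : ∀ A ∈ Q.parts, 0 ≤ μ A := fun A hA => by
    obtain ⟨e, he⟩ := Q.nonempty_of_mem_parts hA
    exact (hpos e).trans (hmono _ _ (singleton_subset_iff.2 he))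
  calc dilworth μ X ≤ ∑ A ∈ (Q.restrict hXY).parts, μ A := dilworth_le_sum_parts _
    _ = ∑ A ∈ Q.parts with (A ∩ X).Nonempty, μ (A ∩ X) :=
        Q.sum_restrict_eq_sum_filter hXY μ
    _ ≤ ∑ A ∈ Q.parts with (A ∩ X).Nonempty, μ A :=
        sum_le_sum fun A _ => hmono _ _ inter_subset_left
    _ ≤ ∑ A ∈ Q.parts, μ A :=
        sum_le_sum_of_subset_of_nonneg (filter_subset _ _) fun A hA _ => hnonneg A hA
    _ = dilworth μ Y := hQ

lemma submodular_union_sup_add_sum_inter_le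
    (hsub : ∀ X Y : Finset E, μ (X ∪ Y) + μ (X ∩ Y) ≤ μ X + μ Y)
    (B : Finset E) {C : Finset (Finset E)}
    (hC : (C : Set (Finset E)).PairwiseDisjoint id) :
    μ (B ∪ C.sup id) + ∑ A ∈ C, μ (A ∩ B) ≤ μ B + ∑ A ∈ C, μ A := by
  induction C using Finset.induction_on with
  | empty => simp
  | @insert A C hAC ih =>
    have hdisj : Disjoint (C.sup id) A := Finset.disjoint_sup_left.2 fun A' (hA' : A' ∈ C) =>
      hC (mem_insert_of_mem hA') (mem_insert_self A C) (ne_of_mem_of_not_mem hA' hAC)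
    have hinter : (B ∪ C.sup id) ∩ A = A ∩ B := by
      rw [union_inter_distrib_right, disjoint_iff_inter_eq_empty.1 hdisj, union_empty,
        inter_comm]
    have hstep := hsub (B ∪ C.sup id) A
    rw [hinter] at hstep
    rw [sup_insert, id, sup_eq_union, union_left_comm, union_comm A,
      sum_insert hAC, sum_insert hAC]
    have := ih (hC.subset (by simp))
    linarith

theorem exists_finpartition_union_inter_add_le
    (hsub : ∀ X Y : Finset E, μ (X ∪ Y) + μ (X ∩ Y) ≤ μ X + μ Y)
    {U B : Finset E} (R : Finpartition U) (hB : B.Nonempty) :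
    ∃ (R' : Finpartition (U ∪ B)) (S : Finpartition (U ∩ B)),
      ∑ A ∈ R'.parts, μ A + ∑ A ∈ S.parts, μ A ≤ ∑ A ∈ R.parts, μ A + μ B := by
  set C := R.parts.filter fun A => (A ∩ B).Nonempty
  set D := R.parts.filter fun A => ¬(A ∩ B).Nonempty
  set M := B ∪ C.sup id
  have hCD : C.sup id ∪ D.sup id = U := by
    rw [← sup_eq_union, ← sup_union, filter_union_filter_not_eq, R.sup_parts]
  have hDM : Disjoint (D.sup id) M := by
    refine disjoint_union_right.2 ⟨Finset.disjoint_sup_left.2 fun A hA => ?_, ?_⟩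
    · exact disjoint_iff_inter_eq_empty.2 (not_nonempty_iff_eq_empty.1 (mem_filter.1 hA).2)
    · exact R.supIndep.disjoint_sup_sup (filter_subset _ _) (filter_subset _ _)
        (disjoint_filter_filter_not _ _ _).symm
  have hM : M ≠ ⊥ := (hB.mono subset_union_left).ne_empty
  have hDMU : D.sup id ⊔ M = U ∪ B := by
    rw [← hCD, sup_eq_union]
    show D.sup id ∪ (B ∪ C.sup id) = _
    ac_rfl
  let R' := (R.ofSubset (filter_subset _ _) rfl).extend hM hDM hDMU
  let S := R.restrict (inter_subset_left : U ∩ B ⊆ U)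
  refine ⟨R', S, ?_⟩
  have hR' : ∑ A ∈ R'.parts, μ A = μ M + ∑ A ∈ D, μ A :=
    sum_insert fun h => hM (hDM.symm.eq_bot_of_le (le_sup (f := id) h))
  have hS : ∑ A ∈ S.parts, μ A = ∑ A ∈ C, μ (A ∩ B) := by
    have hUB : ∀ A ∈ R.parts, A ∩ (U ∩ B) = A ∩ B := fun A hA => by
      rw [← inter_assoc, inter_eq_left.2 (R.le hA)]
    rw [R.sum_restrict_eq_sum_filter]
    exact sum_congr (filter_congr fun A hA => by rw [hUB A hA])
      fun A hA => by rw [hUB A (mem_filter.1 hA).1]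
  have hR : ∑ A ∈ C, μ A + ∑ A ∈ D, μ A = ∑ A ∈ R.parts, μ A :=
    sum_filter_add_sum_filter_not R.parts (fun A => (A ∩ B).Nonempty) μ
  have hC : (C : Set (Finset E)).PairwiseDisjoint id :=
    R.disjoint.subset (coe_subset.2 (filter_subset _ _))
  have hmerge := submodular_union_sup_add_sum_inter_le hsub B hC
  linarith

theorem exists_finpartition_union_inter_le
    (hsub : ∀ X Y : Finset E, μ (X ∪ Y) + μ (X ∩ Y) ≤ μ X + μ Y)
    {X : Finset E} (P : Finpartition X) {T : Finset (Finset E)}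
    (hT : (T : Set (Finset E)).PairwiseDisjoint id) (hne : ∅ ∉ T) :
    ∃ (R : Finpartition (X ∪ T.sup id)) (S : Finpartition (X ∩ T.sup id)),
      ∑ A ∈ R.parts, μ A + ∑ A ∈ S.parts, μ A ≤
        ∑ A ∈ P.parts, μ A + ∑ A ∈ T, μ A := by
  induction T using Finset.induction_on with
  | empty => exact ⟨P.copy (by simp), ⊥, by simp⟩
  | @insert B T hBT ih =>
    obtain ⟨R₀, S₀, h₀⟩ := ih (hT.subset (by simp)) fun h => hne (mem_insert_of_mem h)
    have hB : B.Nonempty := nonempty_iff_ne_empty.2 fun h => hne (h ▸ mem_insert_self B T)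
    obtain ⟨R₁, S₁, h₁⟩ := exists_finpartition_union_inter_add_le hsub R₀ hB
    have hTB : Disjoint (T.sup id) B := Finset.disjoint_sup_left.2 fun A (hA : A ∈ T) =>
      hT (mem_insert_of_mem hA) (mem_insert_self B T) (ne_of_mem_of_not_mem hA hBT)
    have hS : Disjoint (X ∩ T.sup id) ((X ∪ T.sup id) ∩ B) :=
      hTB.mono inter_subset_right inter_subset_right
    have hsup : (insert B T).sup id = B ∪ T.sup id := sup_insert
    refine ⟨R₁.copy (by rw [hsup]; ac_rfl), (S₀.disjUnion S₁ hS).copy ?_, ?_⟩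
    · rw [hsup, union_inter_distrib_right, inter_union_distrib_left,
        disjoint_iff_inter_eq_empty.1 hTB, union_empty]
      ac_rfl
    · rw [Finpartition.copy_parts, Finpartition.copy_parts, Finpartition.sum_disjUnion,
        sum_insert hBT]
      linarith

theorem dilworth_submodular (hsub : ∀ X Y : Finset E, μ (X ∪ Y) + μ (X ∩ Y) ≤ μ X + μ Y)
    (X Y : Finset E) :
    dilworth μ (X ∪ Y) + dilworth μ (X ∩ Y) ≤ dilworth μ X + dilworth μ Y := by
  obtain ⟨P, hP⟩ := exists_sum_parts_eq_dilworth μ X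
  obtain ⟨Q, hQ⟩ := exists_sum_parts_eq_dilworth μ Y
  obtain ⟨R, S, h⟩ :=
    exists_finpartition_union_inter_le hsub P Q.disjoint Q.empty_notMem_parts
  calc dilworth μ (X ∪ Y) + dilworth μ (X ∩ Y)
      ≤ ∑ A ∈ R.parts, μ A + ∑ A ∈ S.parts, μ A :=
        add_le_add (dilworth_le_sum_parts (R.copy (by rw [Q.sup_parts])))
          (dilworth_le_sum_parts (S.copy (by rw [Q.sup_parts])))
    _ ≤ dilworth μ X + dilworth μ Y := hP ▸ hQ ▸ h

end Dilworth

theorem dilworth_monotone_submodular_general {E : Type*} [DecidableEq E]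
    (μ : Finset E → ℤ)
    (hmono : ∀ X Y : Finset E, X ⊆ Y → μ X ≤ μ Y)
    (hsub : ∀ X Y : Finset E, μ (X ∪ Y) + μ (X ∩ Y) ≤ μ X + μ Y)
    (hpos : ∀ e : E, 0 ≤ μ {e}) :
    (∀ X Y : Finset E, X ⊆ Y → dilworth μ X ≤ dilworth μ Y) ∧
    (∀ X Y : Finset E,
      dilworth μ (X ∪ Y) + dilworth μ (X ∩ Y) ≤ dilworth μ X + dilworth μ Y) :=
  ⟨fun _ _ => dilworth_mono hmono hpos, dilworth_submodular hsub⟩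

/-- Let `μ : 2^E → ℤ` be monotone and submodular with `μ({e}) ≥ 0` for all `e`.
Then its Dilworth truncation `μ̂` is monotone and submodular. -/
theorem dilworth_monotone_submodular {E : Type*} [Fintype E] [DecidableEq E]
    (μ : Finset E → ℤ)
    (hmono : ∀ X Y : Finset E, X ⊆ Y → μ X ≤ μ Y)
    (hsub : ∀ X Y : Finset E, μ (X ∪ Y) + μ (X ∩ Y) ≤ μ X + μ Y)
    (hpos : ∀ e : E, 0 ≤ μ {e}) :
    (∀ X Y : Finset E, X ⊆ Y → dilworth μ X ≤ dilworth μ Y) ∧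
    (∀ X Y : Finset E,
      dilworth μ (X ∪ Y) + dilworth μ (X ∩ Y) ≤ dilworth μ X + dilworth μ Y) :=
  dilworth_monotone_submodular_general μ hmono hsub hpos
end

section
/- Let μ: 2^E → ℤ be an integer-valued monotone submodular function on a finite set E with μ(e) ≥ 0 for all e. Then the collection of sets F ⊆ E such that |X| ≤ μ(X) for every nonempty X ⊆ F forms the independent sets of a matroid on E, and the rank of F in this matroid equals min over subpartitions {F₁,…,F_k} of F of |F \ ∪ᵢFᵢ| + Σᵢ μ(Fᵢ). -/
/-- Independence in the matroid induced by `μ`: `|X| ≤ μ(X)` for every nonempty `X ⊆ F`. -/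
def IndepOf {E : Type*} (μ : Finset E → ℤ) (F : Finset E) : Prop :=
  ∀ X ⊆ F, X.Nonempty → (X.card : ℤ) ≤ μ X

/-- The rank of `F` in the induced matroid: the maximum size of an independent subset. -/
noncomputable def indRank {E : Type*} (μ : Finset E → ℤ) (F : Finset E) : ℤ :=
  sSup {n : ℤ | ∃ I ⊆ F, IndepOf μ I ∧ n = (I.card : ℤ)}

/-- The subpartition formula: `min |F \ ∪ᵢFᵢ| + Σᵢ μ(Fᵢ)` over subpartitions of `F`. -/
noncomputable def subpartMin {E : Type*} [DecidableEq E] (μ : Finset E → ℤ) (F : Finset E) : ℤ :=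
  sInf {n : ℤ | ∃ P : Finset (Finset E), (∀ A ∈ P, A.Nonempty ∧ A ⊆ F) ∧
    (P : Set (Finset E)).PairwiseDisjoint id ∧
    n = ((F \ P.sup id).card : ℤ) + ∑ A ∈ P, μ A}


/-!
An independent set `I ⊆ F` that cannot be augmented inside `F` is certified optimal by a
subpartition: call a nonempty `A` tight when `μ A ≤ |I ∩ A|`. By submodularity the union of
two intersecting tight sets is tight, so the maximal tight subsets of `F` are pairwise disjoint,
and every `e ∈ F \ I` lies in one of them since `insert e I` is dependent. On this subpartition
the value `|F \ ⋃ P| + ∑ μ A` equals `|I|`, while every independent subset of `F` has size at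
most the value of every subpartition. This min-max relation gives both the rank formula and the
augmentation axiom.
-/

section

open Finset

variable {E : Type*} {μ : Finset E → ℤ}

theorem IndepOf.empty (μ : Finset E → ℤ) : IndepOf μ ∅ :=
  fun _ hX hne => absurd (subset_empty.mp hX) hne.ne_empty

theorem IndepOf.mono {I J : Finset E} (hIJ : I ⊆ J) (hJ : IndepOf μ J) : IndepOf μ I :=
  fun X hX => hJ X (hX.trans hIJ)

theorem exists_indepOf_subset_card_max (μ : Finset E → ℤ) (F : Finset E) :
    ∃ I ⊆ F, IndepOf μ I ∧ ∀ J ⊆ F, IndepOf μ J → #J ≤ #I := by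
  classical
  obtain ⟨I, hI, hmax⟩ := exists_max_image (F.powerset.filter (IndepOf μ)) card
    ⟨∅, by simpa using IndepOf.empty μ⟩
  rw [mem_filter, mem_powerset] at hI
  exact ⟨I, hI.1, hI.2, fun J hJF hJ => hmax J (by simpa using ⟨hJF, hJ⟩)⟩

theorem nonneg_of_nonempty (hmono : Monotone μ) (hpos : ∀ e, 0 ≤ μ {e}) {A : Finset E}
    (hA : A.Nonempty) : 0 ≤ μ A :=
  let ⟨e, he⟩ := hA
  (hpos e).trans (hmono (singleton_subset_iff.mpr he))

def IsSubpartition (F : Finset E) (P : Finset (Finset E)) : Prop :=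
  (∀ A ∈ P, A.Nonempty ∧ A ⊆ F) ∧ (P : Set (Finset E)).PairwiseDisjoint id

variable [DecidableEq E]

def subpartValue (μ : Finset E → ℤ) (F : Finset E) (P : Finset (Finset E)) : ℤ :=
  #(F \ P.sup id) + ∑ A ∈ P, μ A

theorem card_inter_sup_eq_sum {P : Finset (Finset E)}
    (hP : (P : Set (Finset E)).PairwiseDisjoint id) (I : Finset E) :
    #(I ∩ P.sup id) = ∑ A ∈ P, #(I ∩ A) := by
  rw [sup_eq_biUnion, inter_biUnion]
  exact card_biUnion (hP.mono_on fun _ _ => inter_subset_right)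

theorem IndepOf.card_inter_le (hmono : Monotone μ) (hpos : ∀ e, 0 ≤ μ {e}) {I A : Finset E}
    (hI : IndepOf μ I) (hA : A.Nonempty) : (#(I ∩ A) : ℤ) ≤ μ A := by
  rcases (I ∩ A).eq_empty_or_nonempty with h | h
  · simpa [h] using nonneg_of_nonempty hmono hpos hA
  · exact (hI _ inter_subset_left h).trans (hmono inter_subset_right)

theorem IndepOf.card_le_subpartValue (hmono : Monotone μ) (hpos : ∀ e, 0 ≤ μ {e})
    {F I : Finset E} {P : Finset (Finset E)} (hI : IndepOf μ I) (hIF : I ⊆ F)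
    (hP : IsSubpartition F P) : (#I : ℤ) ≤ subpartValue μ F P :=
  calc (#I : ℤ) = #(I \ P.sup id) + ∑ A ∈ P, (#(I ∩ A) : ℤ) := by
        rw [← card_sdiff_add_card_inter I (P.sup id), card_inter_sup_eq_sum hP.2]; push_cast; rfl
    _ ≤ subpartValue μ F P := by
        unfold subpartValue
        gcongr with A hA
        exact hI.card_inter_le hmono hpos (hP.1 A hA).1

theorem subpartValue_eq_card {F I : Finset E} {P : Finset (Finset E)} (hIF : I ⊆ F)
    (hP : IsSubpartition F P) (hcover : ∀ e ∈ F \ I, ∃ A ∈ P, e ∈ A)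
    (hμ : ∀ A ∈ P, μ A = #(I ∩ A)) : subpartValue μ F P = #I := by
  have hsdiff : F \ P.sup id = I \ P.sup id := by
    refine Subset.antisymm (fun e he => ?_) (sdiff_subset_sdiff hIF le_rfl)
    rw [mem_sdiff] at he ⊢
    by_contra heI
    obtain ⟨A, hA, heA⟩ := hcover e (mem_sdiff.mpr ⟨he.1, fun h => heI ⟨h, he.2⟩⟩)
    exact he.2 (mem_sup.mpr ⟨A, hA, heA⟩)
  rw [subpartValue, hsdiff, sum_congr rfl hμ, ← card_sdiff_add_card_inter I (P.sup id),
    card_inter_sup_eq_sum hP.2]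
  push_cast; rfl

def IsTight (μ : Finset E → ℤ) (I A : Finset E) : Prop :=
  A.Nonempty ∧ μ A ≤ #(I ∩ A)

theorem IsTight.union (hmono : Monotone μ) (hpos : ∀ e, 0 ≤ μ {e})
    (hsub : ∀ X Y : Finset E, μ (X ∪ Y) + μ (X ∩ Y) ≤ μ X + μ Y) {I A B : Finset E}
    (hI : IndepOf μ I) (hA : IsTight μ I A) (hB : IsTight μ I B) (hAB : (A ∩ B).Nonempty) :
    IsTight μ I (A ∪ B) := by
  refine ⟨hA.1.mono subset_union_left, ?_⟩
  have hcard := card_union_add_card_inter (I ∩ A) (I ∩ B)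
  rw [← inter_union_distrib_left, ← inter_inter_distrib_left] at hcard
  have := hI.card_inter_le hmono hpos hAB
  linarith [hsub A B, hA.2, hB.2]

theorem IndepOf.exists_isTight_of_not_indepOf_insert {I : Finset E} {e : E} (hI : IndepOf μ I)
    (he : e ∉ I) (hdep : ¬ IndepOf μ (insert e I)) :
    ∃ X ⊆ insert e I, e ∈ X ∧ IsTight μ I X := by
  simp only [IndepOf, not_forall, not_le, exists_prop] at hdep
  obtain ⟨X, hX, hne, hlt⟩ := hdep
  have heX : e ∈ X := by
    by_contra heX
    exact (hI X ((subset_insert_iff_of_notMem heX).mp hX) hne).not_gt hlt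
  have hIX : I ∩ X = X.erase e := by
    ext x
    rw [mem_inter, mem_erase]
    constructor
    · rintro ⟨hxI, hxX⟩
      exact ⟨ne_of_mem_of_not_mem hxI he, hxX⟩
    · rintro ⟨hxe, hxX⟩
      exact ⟨(mem_insert.mp (hX hxX)).resolve_left hxe, hxX⟩
  refine ⟨X, hX, heX, hne, ?_⟩
  rw [hIX, card_erase_of_mem heX, Nat.cast_sub (card_pos.mpr hne)]
  push_cast
  omega

theorem IndepOf.exists_subpartValue_eq_card (hmono : Monotone μ) (hpos : ∀ e, 0 ≤ μ {e})
    (hsub : ∀ X Y : Finset E, μ (X ∪ Y) + μ (X ∩ Y) ≤ μ X + μ Y) {F I : Finset E}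
    (hI : IndepOf μ I) (hIF : I ⊆ F) (hmax : ∀ e ∈ F \ I, ¬ IndepOf μ (insert e I)) :
    ∃ P, IsSubpartition F P ∧ subpartValue μ F P = #I := by
  classical
  set T := F.powerset.filter (IsTight μ I)
  have hT : ∀ {A}, A ∈ T ↔ A ⊆ F ∧ IsTight μ I A := by simp [T]
  set P := T.filter (Maximal (· ∈ T))
  have hPT : ∀ {A}, A ∈ P → A ⊆ F ∧ IsTight μ I A := fun hA => hT.mp (mem_filter.mp hA).1
  have hP : IsSubpartition F P := by
    refine ⟨fun A hA => ⟨(hPT hA).2.1, (hPT hA).1⟩, fun A hA B hB hne => ?_⟩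
    by_contra hAB
    obtain ⟨hAT, hAmax⟩ := mem_filter.mp hA
    obtain ⟨hBT, hBmax⟩ := mem_filter.mp hB
    obtain ⟨hAF, hAt⟩ := hT.mp hAT
    obtain ⟨hBF, hBt⟩ := hT.mp hBT
    have hU : A ∪ B ∈ T := hT.mpr ⟨union_subset hAF hBF,
      hAt.union hmono hpos hsub hI hBt (not_disjoint_iff_nonempty_inter.mp hAB)⟩
    exact hne ((hAmax.eq_of_le hU subset_union_left).trans
      (hBmax.eq_of_le hU subset_union_right).symm)
  refine ⟨P, hP, subpartValue_eq_card hIF hP (fun e he => ?_) (fun A hA => ?_)⟩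
  · obtain ⟨heF, heI⟩ := mem_sdiff.mp he
    obtain ⟨X, hX, heX, hXt⟩ := hI.exists_isTight_of_not_indepOf_insert heI (hmax e he)
    have hXT : X ∈ T := hT.mpr ⟨hX.trans (insert_subset heF hIF), hXt⟩
    obtain ⟨A, hXA, hA⟩ := T.exists_le_maximal hXT
    exact ⟨A, mem_filter.mpr ⟨hA.prop, hA⟩, hXA heX⟩
  · exact le_antisymm (hPT hA).2.2 (hI.card_inter_le hmono hpos (hPT hA).2.1)

end

theorem induced_matroid_of_submodular_general {E : Type*} [DecidableEq E]
    (μ : Finset E → ℤ)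
    (hmono : ∀ X Y : Finset E, X ⊆ Y → μ X ≤ μ Y)
    (hsub : ∀ X Y : Finset E, μ (X ∪ Y) + μ (X ∩ Y) ≤ μ X + μ Y)
    (hpos : ∀ e : E, 0 ≤ μ {e}) :
    IndepOf μ ∅ ∧
    (∀ F₁ F₂ : Finset E, F₁ ⊆ F₂ → IndepOf μ F₂ → IndepOf μ F₁) ∧
    (∀ I J : Finset E, IndepOf μ I → IndepOf μ J → I.card < J.card →
      ∃ e ∈ J \ I, IndepOf μ (insert e I)) ∧
    (∀ F : Finset E, indRank μ F = subpartMin μ F) := by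
  have hmono : Monotone μ := fun X Y h => hmono X Y h
  refine ⟨IndepOf.empty μ, fun _ _ h hJ => hJ.mono h, fun I J hI hJ hlt => ?_, fun F => ?_⟩
  · by_contra! hno
    obtain ⟨P, hP, hval⟩ := hI.exists_subpartValue_eq_card hmono hpos hsub
      (Finset.subset_union_left (s₂ := J)) (by rwa [Finset.union_sdiff_left])
    have := hJ.card_le_subpartValue hmono hpos Finset.subset_union_right hP
    omega
  · obtain ⟨I, hIF, hI, hmax⟩ := exists_indepOf_subset_card_max μ F
    obtain ⟨P, hP, hval⟩ := hI.exists_subpartValue_eq_card hmono hpos hsub hIF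
      fun e he hins => by
        have := hmax _ (Finset.insert_subset (Finset.mem_sdiff.mp he).1 hIF) hins
        rw [Finset.card_insert_of_notMem (Finset.mem_sdiff.mp he).2] at this
        omega
    have hrank : indRank μ F = I.card := IsGreatest.csSup_eq
      ⟨⟨I, hIF, hI, rfl⟩, by rintro _ ⟨J, hJF, hJ, rfl⟩; exact_mod_cast hmax J hJF hJ⟩
    have hmin : subpartMin μ F = I.card := IsLeast.csInf_eq
      ⟨⟨P, hP.1, hP.2, hval.symm⟩, by
        rintro _ ⟨Q, hQ, hQd, rfl⟩
        exact hI.card_le_subpartValue hmono hpos hIF ⟨hQ, hQd⟩⟩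
    rw [hrank, hmin]

/-- Edmonds: for an integer-valued monotone submodular `μ` with `μ({e}) ≥ 0`, the sets
`F` with `|X| ≤ μ(X)` for all nonempty `X ⊆ F` are the independent sets of a matroid on
`E` (empty set independent, hereditary, augmentation), whose rank function is given by
the subpartition formula. -/
theorem induced_matroid_of_submodular {E : Type*} [Fintype E] [DecidableEq E]
    (μ : Finset E → ℤ)
    (hmono : ∀ X Y : Finset E, X ⊆ Y → μ X ≤ μ Y)
    (hsub : ∀ X Y : Finset E, μ (X ∪ Y) + μ (X ∩ Y) ≤ μ X + μ Y)
    (hpos : ∀ e : E, 0 ≤ μ {e}) :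
    IndepOf μ ∅ ∧
    (∀ F₁ F₂ : Finset E, F₁ ⊆ F₂ → IndepOf μ F₂ → IndepOf μ F₁) ∧
    (∀ I J : Finset E, IndepOf μ I → IndepOf μ J → I.card < J.card →
      ∃ e ∈ J \ I, IndepOf μ (insert e I)) ∧
    (∀ F : Finset E, indRank μ F = subpartMin μ F) :=
  induced_matroid_of_submodular_general μ hmono hsub hpos
end

section
/- Let Γ be a group with a linear representation ρ: Γ → GL(𝔽^d) over a field 𝔽. Define d_ρ(X) = dim_𝔽 span{ image(I_d − ρ(γ)) : γ ∈ X } for X ⊆ Γ (with d_ρ(∅)=0). Then d_ρ is monotone, submodular, invariant under conjugation, and invariant under taking generated subgroups; in particular μ = d_ρ/d is a symmetric polymatroidal function over Γ. -/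
/-- `d_ρ(X) = dim_𝔽 span{ image(I − ρ(γ)) : γ ∈ X }`. -/
noncomputable def dRho {𝔽 : Type*} [Field 𝔽] {d : ℕ} {Γ : Type*} [Group Γ]
    (ρ : Γ →* ((Fin d → 𝔽) ≃ₗ[𝔽] (Fin d → 𝔽))) (X : Set Γ) : ℕ :=
  Module.finrank 𝔽
    ↥(⨆ γ ∈ X, LinearMap.range (LinearMap.id - (ρ γ).toLinearMap))

/-!
The images `range (1 - ρ γ)` behave like a cocycle: `1 - ρ (a * b) = (1 - ρ a) ∘ ρ b + (1 - ρ b)`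
and `1 - ρ a⁻¹ = (1 - ρ a) ∘ (-ρ a⁻¹)`, so the span of the images over `X` already contains
those over the subgroup generated by `X`; and `1 - ρ (γ x γ⁻¹) = ρ γ ∘ (1 - ρ x) ∘ ρ γ⁻¹`, so
conjugating `X` moves the span by the automorphism `ρ γ`. Submodularity is the dimension formula
`dim (S ⊔ T) + dim (S ⊓ T) = dim S + dim T`, since the span over `X ∪ Y` is the join of the two
spans and the span over `X ∩ Y` lies in their meet.
-/

section Displacement

variable {R V Γ : Type*} [Ring R] [AddCommGroup V] [Module R V] [Group Γ]
  (ρ : Γ →* (V ≃ₗ[R] V))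

def displacement (X : Set Γ) : Submodule R V :=
  ⨆ γ ∈ X, LinearMap.range (LinearMap.id - (ρ γ).toLinearMap)

theorem range_id_sub_mul_le (a b : Γ) :
    LinearMap.range (LinearMap.id - (ρ (a * b)).toLinearMap) ≤
      LinearMap.range (LinearMap.id - (ρ a).toLinearMap) ⊔
        LinearMap.range (LinearMap.id - (ρ b).toLinearMap) := by
  rintro _ ⟨x, rfl⟩
  refine Submodule.mem_sup.2 ⟨_, ⟨ρ b x, rfl⟩, _, ⟨x, rfl⟩, ?_⟩
  simp only [LinearMap.sub_apply, LinearMap.id_apply, LinearEquiv.coe_coe, map_mul,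
    LinearEquiv.mul_apply]
  abel

theorem range_id_sub_inv_le (a : Γ) :
    LinearMap.range (LinearMap.id - (ρ a⁻¹).toLinearMap) ≤
      LinearMap.range (LinearMap.id - (ρ a).toLinearMap) := by
  rintro _ ⟨x, rfl⟩
  refine ⟨-ρ a⁻¹ x, ?_⟩
  have hx : ρ a (ρ a⁻¹ x) = x := by
    rw [map_inv]
    exact (ρ a).apply_symm_apply x
  simp only [LinearMap.sub_apply, LinearMap.id_apply, LinearEquiv.coe_coe, map_neg, hx]
  abel

theorem range_id_sub_conj (γ x : Γ) :
    LinearMap.range (LinearMap.id - (ρ (γ * x * γ⁻¹)).toLinearMap) =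
      (LinearMap.range (LinearMap.id - (ρ x).toLinearMap)).map (ρ γ).toLinearMap := by
  have h : LinearMap.id - (ρ (γ * x * γ⁻¹)).toLinearMap =
      (ρ γ).toLinearMap ∘ₗ (LinearMap.id - (ρ x).toLinearMap) ∘ₗ (ρ γ⁻¹).toLinearMap := by
    ext v
    simp [map_mul]
  rw [h, LinearMap.range_comp, LinearMap.range_comp_of_range_eq_top _ (LinearEquiv.range _)]

theorem displacement_mono {X Y : Set Γ} (h : X ⊆ Y) : displacement ρ X ≤ displacement ρ Y :=
  biSup_mono h

theorem displacement_empty : displacement ρ (∅ : Set Γ) = ⊥ := by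
  simp [displacement]

theorem displacement_union (X Y : Set Γ) :
    displacement ρ (X ∪ Y) = displacement ρ X ⊔ displacement ρ Y := by
  simp only [displacement, iSup_union]

theorem displacement_closure (X : Set Γ) :
    displacement ρ (Subgroup.closure X) = displacement ρ X := by
  refine le_antisymm (iSup₂_le fun γ hγ => ?_) (displacement_mono ρ Subgroup.subset_closure)
  induction hγ using Subgroup.closure_induction with
  | mem g hg => exact le_iSup₂_of_le g hg le_rfl
  | one => simp
  | mul a b _ _ ha hb => exact (range_id_sub_mul_le ρ a b).trans (sup_le ha hb)
  | inv a _ ha => exact (range_id_sub_inv_le ρ a).trans ha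

theorem displacement_conj (X : Set Γ) (γ : Γ) :
    displacement ρ ((fun x => γ * x * γ⁻¹) '' X) = (displacement ρ X).map (ρ γ).toLinearMap := by
  simp only [displacement, Submodule.map_iSup, iSup_image, range_id_sub_conj]

end Displacement

section dRho

variable {𝔽 : Type*} [Field 𝔽] {d : ℕ} {Γ : Type*} [Group Γ]
  (ρ : Γ →* ((Fin d → 𝔽) ≃ₗ[𝔽] (Fin d → 𝔽)))

theorem dRho_eq_finrank_displacement (X : Set Γ) :
    dRho ρ X = Module.finrank 𝔽 (displacement ρ X) :=
  rfl

theorem dRho_empty : dRho ρ ∅ = 0 := by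
  rw [dRho_eq_finrank_displacement, displacement_empty, finrank_bot]

theorem dRho_mono {X Y : Set Γ} (h : X ⊆ Y) : dRho ρ X ≤ dRho ρ Y :=
  Submodule.finrank_mono (displacement_mono ρ h)

theorem dRho_union_add_inter_le (X Y : Set Γ) :
    dRho ρ (X ∪ Y) + dRho ρ (X ∩ Y) ≤ dRho ρ X + dRho ρ Y := by
  have hinter : displacement ρ (X ∩ Y) ≤ displacement ρ X ⊓ displacement ρ Y :=
    le_inf (displacement_mono ρ Set.inter_subset_left) (displacement_mono ρ Set.inter_subset_right)
  calc dRho ρ (X ∪ Y) + dRho ρ (X ∩ Y)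
      ≤ Module.finrank 𝔽 ↥(displacement ρ X ⊔ displacement ρ Y) +
          Module.finrank 𝔽 ↥(displacement ρ X ⊓ displacement ρ Y) := by
        rw [dRho_eq_finrank_displacement, displacement_union]
        exact Nat.add_le_add_left (Submodule.finrank_mono hinter) _
    _ = dRho ρ X + dRho ρ Y := Submodule.finrank_sup_add_finrank_inf_eq _ _

theorem dRho_conj (X : Set Γ) (γ : Γ) : dRho ρ ((fun x => γ * x * γ⁻¹) '' X) = dRho ρ X := by
  rw [dRho_eq_finrank_displacement, dRho_eq_finrank_displacement, displacement_conj]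
  exact LinearEquiv.finrank_map_eq (ρ γ) _

theorem dRho_closure (X : Set Γ) : dRho ρ (Subgroup.closure X) = dRho ρ X := by
  rw [dRho_eq_finrank_displacement, dRho_eq_finrank_displacement, displacement_closure]

end dRho

theorem symPolymatroidal_natCast_div {Γ : Type*} [Group Γ] (f : Set Γ → ℕ) (hempty : f ∅ = 0)
    (hmono : Monotone f)
    (hsub : ∀ X Y : Set Γ, f (X ∪ Y) + f (X ∩ Y) ≤ f X + f Y)
    (hclosure : ∀ X : Set Γ, f (Subgroup.closure X) = f X)
    (hconj : ∀ (X : Set Γ) (γ : Γ), f ((fun x => γ * x * γ⁻¹) '' X) = f X) (c : ℕ) :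
    SymPolymatroidal (fun X => (f X : ℝ) / c) := by
  refine ⟨by simp [hempty], fun X => by positivity,
    fun X Y h => div_le_div_of_nonneg_right (by exact_mod_cast hmono h) c.cast_nonneg,
    fun X Y => ?_, fun X _ => by simp only [hclosure], fun X γ _ => by simp only [hconj]⟩
  rw [← add_div, ← add_div]
  exact div_le_div_of_nonneg_right (by exact_mod_cast hsub X Y) c.cast_nonneg

/-- For a representation `ρ : Γ → GL(𝔽^d)`, the function
`d_ρ(X) = dim span{image(I − ρ(γ)) : γ ∈ X}` is monotone, submodular, invariant under
conjugation, and invariant under taking generated subgroups; in particular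
`μ = d_ρ/d` is a symmetric polymatroidal function over `Γ`. -/
theorem dRho_symPolymatroidal {𝔽 : Type*} [Field 𝔽] {d : ℕ} {Γ : Type*} [Group Γ]
    (ρ : Γ →* ((Fin d → 𝔽) ≃ₗ[𝔽] (Fin d → 𝔽))) :
    (∀ X Y : Set Γ, X ⊆ Y → dRho ρ X ≤ dRho ρ Y) ∧
    (∀ X Y : Set Γ, dRho ρ (X ∪ Y) + dRho ρ (X ∩ Y) ≤ dRho ρ X + dRho ρ Y) ∧
    (∀ (X : Set Γ) (γ : Γ), dRho ρ ((fun x => γ * x * γ⁻¹) '' X) = dRho ρ X) ∧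
    (∀ X : Set Γ, X.Nonempty → dRho ρ ↑(Subgroup.closure X) = dRho ρ X) ∧
    SymPolymatroidal (fun X => (dRho ρ X : ℝ) / d) := by
  refine ⟨fun X Y => dRho_mono ρ, dRho_union_add_inter_le ρ, dRho_conj ρ,
    fun X _ => dRho_closure ρ X, ?_⟩
  exact symPolymatroidal_natCast_div _ (dRho_empty ρ) (fun _ _ => dRho_mono ρ)
    (dRho_union_add_inter_le ρ) (dRho_closure ρ) (dRho_conj ρ) d
end
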